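/- Model selection consistency: Let Θ_K ⊂ ℝ^{D_K}, 1 ≤ K ≤ K_M, with D₁ ≤ … ≤ D_{K_M}, θ_K⁰ ∈ argmin_{Θ_K} E[γ(θ)], and K₀ = min argmin_K E[γ(θ_K⁰)]. Assume (B2) γ_n(θ̂_K) → E[γ(θ_K⁰)] in probability for each K; (B3) pen(K) > 0, pen(K) = o_P(1), and n(pen(K) - pen(K')) → ∞ in probability for K > K'; (B4) n(γ_n(θ̂_{K₀}) - γ_n(θ̂_K)) = O_P(1) for every K minimizing E[γ(θ_K⁰)]. Define K̂ = min argmin_K {γ_n(θ̂_K) + pen(K)}. Then P[K̂ ≠ K₀] → 0 as n → ∞. -/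

import Mathlib

/-!
A model `K ≠ K₀` is selected only if its penalized criterion is below that of `K₀`.
If `K` has a strictly larger limiting contrast, the empirical contrasts converge in probability
to separated limits while the penalties vanish, so this has vanishing probability. If `K` ties
with `K₀`, then `K > K₀`, and selecting `K` forces
`n (pen(K) - pen(K₀)) ≤ n (γ_n(θ̂_{K₀}) - γ_n(θ̂_K))`: a quantity diverging in probability is
below one bounded in probability. A union bound over the finitely many models concludes.
-/

open MeasureTheory Filter Topology

section

variable {Ω ι : Type*} [MeasurableSpace Ω] {μ : Measure Ω} {l : Filter ι}

lemma tendsto_measure_zero_of_subset {A B : ι → Set Ω} (hAB : ∀ i, A i ⊆ B i)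
    (hB : Tendsto (fun i => μ (B i)) l (𝓝 0)) : Tendsto (fun i => μ (A i)) l (𝓝 0) :=
  tendsto_of_tendsto_of_tendsto_of_le_of_le tendsto_const_nhds hB (fun _ => zero_le)
    fun i => measure_mono (hAB i)

lemma tendsto_measure_zero_of_subset_union {A B C : ι → Set Ω}
    (hABC : ∀ i, A i ⊆ B i ∪ C i)
    (hB : Tendsto (fun i => μ (B i)) l (𝓝 0)) (hC : Tendsto (fun i => μ (C i)) l (𝓝 0)) :
    Tendsto (fun i => μ (A i)) l (𝓝 0) := by
  have hBC : Tendsto (fun i => μ (B i) + μ (C i)) l (𝓝 0) := by simpa using hB.add hC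
  exact tendsto_of_tendsto_of_tendsto_of_le_of_le tendsto_const_nhds hBC (fun _ => zero_le)
    fun i => (measure_mono (hABC i)).trans (measure_union_le _ _)

lemma tendsto_measure_ne_of_tendsto_measure_eq {κ : Type*} {f : ι → Ω → κ} {s : Finset κ}
    {a : κ} (hf : ∀ i ω, f i ω ∈ s)
    (h : ∀ k ∈ s, k ≠ a → Tendsto (fun i => μ {ω | f i ω = k}) l (𝓝 0)) :
    Tendsto (fun i => μ {ω | f i ω ≠ a}) l (𝓝 0) := by
  classical
  have hsum : Tendsto (fun i => ∑ k ∈ s.erase a, μ {ω | f i ω = k}) l (𝓝 0) := by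
    simpa using tendsto_finsetSum (s.erase a) fun k hk =>
      h k (Finset.mem_of_mem_erase hk) (Finset.ne_of_mem_erase hk)
  refine tendsto_of_tendsto_of_tendsto_of_le_of_le tendsto_const_nhds hsum (fun _ => zero_le)
    fun i => ?_
  calc μ {ω | f i ω ≠ a} ≤ μ (⋃ k ∈ s.erase a, {ω | f i ω = k}) :=
        measure_mono fun ω hω => Set.mem_biUnion (Finset.mem_erase.2 ⟨hω, hf i ω⟩) rfl
    _ ≤ ∑ k ∈ s.erase a, μ {ω | f i ω = k} := measure_biUnion_finset_le _ _

lemma tendstoInMeasure_of_tendsto_measure_lt {E : Type*} [PseudoMetricSpace E]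
    {f : ι → Ω → E} {g : Ω → E}
    (h : ∀ ε > 0, Tendsto (fun i => μ {ω | ε < dist (f i ω) (g ω)}) l (𝓝 0)) :
    TendstoInMeasure μ f l g :=
  tendstoInMeasure_iff_dist.2 fun ε hε =>
    tendsto_measure_zero_of_subset (fun _ _ hω => (half_lt_self hε).trans_le hω)
      (h (ε / 2) (half_pos hε))

lemma MeasureTheory.TendstoInMeasure.add {E : Type*} [SeminormedAddCommGroup E]
    {f f' : ι → Ω → E} {g g' : Ω → E} (hf : TendstoInMeasure μ f l g)
    (hf' : TendstoInMeasure μ f' l g') :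
    TendstoInMeasure μ (f + f') l (g + g') := by
  rw [tendstoInMeasure_iff_norm] at hf hf' ⊢
  intro ε hε
  refine tendsto_measure_zero_of_subset_union (fun i ω hω => ?_) (hf (ε / 2) (half_pos hε))
    (hf' (ε / 2) (half_pos hε))
  by_contra! hlt
  simp only [Set.mem_union, Set.mem_ofPred_eq, not_or, not_le] at hlt
  have hsplit : f i ω + f' i ω - (g ω + g' ω) = (f i ω - g ω) + (f' i ω - g' ω) := by abel
  have := norm_add_le (f i ω - g ω) (f' i ω - g' ω)
  simp only [Set.mem_ofPred_eq, Pi.add_apply, hsplit] at hω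
  linarith

lemma MeasureTheory.TendstoInMeasure.tendsto_measure_le_of_lt {f f' : ι → Ω → ℝ} {u v : ℝ}
    (hf : TendstoInMeasure μ f l fun _ => u) (hf' : TendstoInMeasure μ f' l fun _ => v)
    (hvu : v < u) : Tendsto (fun i => μ {ω | f i ω ≤ f' i ω}) l (𝓝 0) := by
  rw [tendstoInMeasure_iff_dist] at hf hf'
  have hδ : 0 < (u - v) / 3 := by linarith
  refine tendsto_measure_zero_of_subset_union (fun i ω hω => ?_) (hf _ hδ) (hf' _ hδ)
  by_contra! hlt
  simp only [Set.mem_union, Set.mem_ofPred_eq, not_or, not_le, Real.dist_eq, abs_lt] at hlt hω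
  linarith

lemma tendsto_measure_le_of_bounded_of_tendsto_atTop {Y Z : ι → Ω → ℝ}
    (hY : ∀ ε > (0 : ℝ), ∃ C : ℝ, ∀ᶠ i in l,
      μ {ω | C < |Y i ω|} ≤ ENNReal.ofReal ε)
    (hZ : ∀ C : ℝ, Tendsto (fun i => μ {ω | Z i ω ≤ C}) l (𝓝 0)) :
    Tendsto (fun i => μ {ω | Z i ω ≤ Y i ω}) l (𝓝 0) := by
  refine ENNReal.tendsto_nhds_zero.2 fun ε hε => ?_
  obtain ⟨r, -, hr, hrε⟩ := ENNReal.lt_iff_exists_real_btwn.1 hε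
  have hr : 0 < r := ENNReal.ofReal_pos.1 hr
  obtain ⟨C, hC⟩ := hY (r / 2) (half_pos hr)
  have hZC : ∀ᶠ i in l, μ {ω | Z i ω ≤ C} ≤ ENNReal.ofReal (r / 2) :=
    (hZ C).eventually (ge_mem_nhds (ENNReal.ofReal_pos.2 (half_pos hr)))
  filter_upwards [hC, hZC] with i hYi hZi
  have hsub : {ω | Z i ω ≤ Y i ω} ⊆ {ω | C < |Y i ω|} ∪ {ω | Z i ω ≤ C} := by
    intro ω hω
    by_contra! hlt
    simp only [Set.mem_union, Set.mem_ofPred_eq, not_or, not_lt, not_le, abs_le] at hlt hω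
    linarith
  calc μ {ω | Z i ω ≤ Y i ω} ≤ μ {ω | C < |Y i ω|} + μ {ω | Z i ω ≤ C} :=
        (measure_mono hsub).trans (measure_union_le _ _)
    _ ≤ ENNReal.ofReal (r / 2) + ENNReal.ofReal (r / 2) := add_le_add hYi hZi
    _ = ENNReal.ofReal r := by
        rw [← ENNReal.ofReal_add (by positivity) (by positivity), add_halves]
    _ ≤ ε := hrε.le

end

theorem model_selection_consistency_general (KM : ℕ)
    (D : ℕ → ℕ)
    {Ω : Type*} [MeasurableSpace Ω] (μ : Measure Ω)
    (g : (K : ℕ) → (Fin (D K) → ℝ) → ℝ)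
    (θ0 : (K : ℕ) → Fin (D K) → ℝ)
    -- K₀ = min argmin of the minimal expected contrast
    (K0 : ℕ) (hK0mem : K0 ∈ Finset.Icc 1 KM)
    (hK0min : ∀ K ∈ Finset.Icc 1 KM, g K0 (θ0 K0) ≤ g K (θ0 K))
    (hK0least : ∀ K ∈ Finset.Icc 1 KM, g K (θ0 K) ≤ g K0 (θ0 K0) → K0 ≤ K)
    -- estimators and their empirical contrast values
    (c : (K : ℕ) → ℕ → Ω → ℝ)
    -- (B2)
    (hB2 : ∀ K ∈ Finset.Icc 1 KM, ∀ ε > (0:ℝ),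
      Tendsto (fun n => μ {ω | ε < |c K n ω - g K (θ0 K)|}) atTop (nhds 0))
    -- (B3)
    (pen : ℕ → ℕ → Ω → ℝ)
    (hpen_pos : ∀ n K ω, 0 < pen n K ω)
    (hpen_small : ∀ K ∈ Finset.Icc 1 KM, ∀ ε > (0:ℝ),
      Tendsto (fun n => μ {ω | ε < pen n K ω}) atTop (nhds 0))
    (hpen_sep : ∀ K ∈ Finset.Icc 1 KM, ∀ K' ∈ Finset.Icc 1 KM, K' < K →
      ∀ C : ℝ, Tendsto
        (fun (n : ℕ) => μ {ω | (n : ℝ) * (pen n K ω - pen n K' ω) ≤ C}) atTop (nhds 0))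
    -- (B4)
    (hB4 : ∀ K ∈ Finset.Icc 1 KM, g K (θ0 K) = g K0 (θ0 K0) →
      ∀ ε > (0:ℝ), ∃ C : ℝ, ∀ᶠ n in atTop,
        μ {ω | C < |((n : ℕ) : ℝ) * (c K0 n ω - c K n ω)|} ≤ ENNReal.ofReal ε)
    -- the selected model: smallest minimizer of the penalized criterion
    (Khat : ℕ → Ω → ℕ)
    (hKhat_mem : ∀ n ω, Khat n ω ∈ Finset.Icc 1 KM)
    (hKhat_min : ∀ n ω, ∀ K ∈ Finset.Icc 1 KM,
      c (Khat n ω) n ω + pen n (Khat n ω) ω ≤ c K n ω + pen n K ω) :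
    Tendsto (fun n => μ {ω | Khat n ω ≠ K0}) atTop (nhds 0) := by
  refine tendsto_measure_ne_of_tendsto_measure_eq hKhat_mem fun K hK hKK0 => ?_
  have hselect (n : ℕ) (ω : Ω) (hω : Khat n ω = K) :
      pen n K ω - pen n K0 ω ≤ c K0 n ω - c K n ω := by
    have := hKhat_min n ω K0 hK0mem
    rw [hω] at this
    linarith
  rcases (hK0min K hK).lt_or_eq with hlt | heq
  · have hconv (k : ℕ) (hk : k ∈ Finset.Icc 1 KM) :
        TendstoInMeasure μ (c k) atTop fun _ => g k (θ0 k) :=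
      tendstoInMeasure_of_tendsto_measure_lt (by simpa only [Real.dist_eq] using hB2 k hk)
    have hpen : TendstoInMeasure μ (fun n => pen n K0) atTop 0 :=
      tendstoInMeasure_of_tendsto_measure_lt fun ε hε => by
        simpa only [Pi.zero_apply, Real.dist_eq, sub_zero, abs_of_pos (hpen_pos _ _ _)]
          using hpen_small K0 hK0mem ε hε
    have hcrit : TendstoInMeasure μ (c K0 + fun n => pen n K0) atTop fun _ => g K0 (θ0 K0) := by
      simpa only [add_zero] using (hconv K0 hK0mem).add hpen
    refine tendsto_measure_zero_of_subset (fun n ω hω => ?_)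
      ((hconv K hK).tendsto_measure_le_of_lt hcrit hlt)
    have := hselect n ω hω
    have := hpen_pos n K ω
    simp only [Set.mem_ofPred_eq, Pi.add_apply]
    linarith
  · have hK0K : K0 < K := (hK0least K hK heq.ge).lt_of_ne' hKK0
    refine tendsto_measure_zero_of_subset (fun n ω hω => ?_)
      (tendsto_measure_le_of_bounded_of_tendsto_atTop (hB4 K hK heq.symm)
        (hpen_sep K hK K0 hK0mem hK0K))
    exact mul_le_mul_of_nonneg_left (hselect n ω hω) n.cast_nonneg

/-- Model selection consistency: models `Θ_K ⊂ ℝ^{D_K}` for `1 ≤ K ≤ K_M` with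
nondecreasing dimensions, `θ_K⁰` a minimizer of the expected contrast `g_K` in model
`K`, and `K₀` the smallest index minimizing `K ↦ g_K(θ_K⁰)`. Under
(B2) convergence in probability of the empirical contrast at the estimators,
(B3) positive penalties tending to `0` in probability with `n(pen(K) - pen(K')) → ∞`
in probability for `K > K'`, and (B4) `n(γ_n(θ̂_{K₀}) - γ_n(θ̂_K)) = O_P(1)` for
every minimizing `K`, the selected model `K̂ = min argmin (γ_n(θ̂_K) + pen(K))`
satisfies `P[K̂ ≠ K₀] → 0`. -/
theorem model_selection_consistency (dim : ℕ) (KM : ℕ) (hKM : 1 ≤ KM)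
    (D : ℕ → ℕ) (hD : ∀ K K', K ≤ K' → D K ≤ D K')
    {Ω : Type*} [MeasurableSpace Ω] (μ : Measure Ω) [IsProbabilityMeasure μ]
    (P : Measure (Fin dim → ℝ)) [IsProbabilityMeasure P]
    (X : ℕ → Ω → (Fin dim → ℝ)) (hXm : ∀ i, Measurable (X i))
    (hindep : ProbabilityTheory.iIndepFun X μ)
    (hmap : ∀ i, MeasureTheory.Measure.map (X i) μ = P)
    (Θ : (K : ℕ) → Set (Fin (D K) → ℝ))
    (γ : (K : ℕ) → (Fin (D K) → ℝ) → (Fin dim → ℝ) → ℝ)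
    (g : (K : ℕ) → (Fin (D K) → ℝ) → ℝ)
    (hg : ∀ K θ, g K θ = ∫ x, γ K θ x ∂P)
    (θ0 : (K : ℕ) → Fin (D K) → ℝ)
    (hθ0 : ∀ K ∈ Finset.Icc 1 KM, θ0 K ∈ Θ K ∧ ∀ θ ∈ Θ K, g K (θ0 K) ≤ g K θ)
    -- K₀ = min argmin of the minimal expected contrast
    (K0 : ℕ) (hK0mem : K0 ∈ Finset.Icc 1 KM)
    (hK0min : ∀ K ∈ Finset.Icc 1 KM, g K0 (θ0 K0) ≤ g K (θ0 K))
    (hK0least : ∀ K ∈ Finset.Icc 1 KM, g K (θ0 K) ≤ g K0 (θ0 K0) → K0 ≤ K)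
    -- estimators and their empirical contrast values
    (θhat : (K : ℕ) → ℕ → Ω → (Fin (D K) → ℝ))
    (hθhat : ∀ K ∈ Finset.Icc 1 KM, ∀ n ω, θhat K n ω ∈ Θ K)
    (c : (K : ℕ) → ℕ → Ω → ℝ)
    (hc : ∀ K n ω,
      c K n ω = (∑ i ∈ Finset.range n, γ K (θhat K n ω) (X i ω)) / n)
    -- (B2)
    (hB2 : ∀ K ∈ Finset.Icc 1 KM, ∀ ε > (0:ℝ),
      Tendsto (fun n => μ {ω | ε < |c K n ω - g K (θ0 K)|}) atTop (nhds 0))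
    -- (B3)
    (pen : ℕ → ℕ → Ω → ℝ)
    (hpen_pos : ∀ n K ω, 0 < pen n K ω)
    (hpen_small : ∀ K ∈ Finset.Icc 1 KM, ∀ ε > (0:ℝ),
      Tendsto (fun n => μ {ω | ε < pen n K ω}) atTop (nhds 0))
    (hpen_sep : ∀ K ∈ Finset.Icc 1 KM, ∀ K' ∈ Finset.Icc 1 KM, K' < K →
      ∀ C : ℝ, Tendsto
        (fun (n : ℕ) => μ {ω | (n : ℝ) * (pen n K ω - pen n K' ω) ≤ C}) atTop (nhds 0))
    -- (B4)
    (hB4 : ∀ K ∈ Finset.Icc 1 KM, g K (θ0 K) = g K0 (θ0 K0) →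
      ∀ ε > (0:ℝ), ∃ C : ℝ, ∀ᶠ n in atTop,
        μ {ω | C < |((n : ℕ) : ℝ) * (c K0 n ω - c K n ω)|} ≤ ENNReal.ofReal ε)
    -- the selected model: smallest minimizer of the penalized criterion
    (Khat : ℕ → Ω → ℕ)
    (hKhat_mem : ∀ n ω, Khat n ω ∈ Finset.Icc 1 KM)
    (hKhat_min : ∀ n ω, ∀ K ∈ Finset.Icc 1 KM,
      c (Khat n ω) n ω + pen n (Khat n ω) ω ≤ c K n ω + pen n K ω)
    (hKhat_least : ∀ n ω, ∀ K ∈ Finset.Icc 1 KM,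
      c K n ω + pen n K ω ≤ c (Khat n ω) n ω + pen n (Khat n ω) ω →
      Khat n ω ≤ K) :
    Tendsto (fun n => μ {ω | Khat n ω ≠ K0}) atTop (nhds 0) :=
  model_selection_consistency_general KM D μ g θ0 K0 hK0mem hK0min hK0least c hB2 pen hpen_pos
    hpen_small hpen_sep hB4 Khat hKhat_mem hKhat_min
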